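/- Let g be a finite-dimensional nilpotent associative algebra over F_q, λ ∈ g*, p an associative polarization of λ (a maximal isotropic subalgebra for B_λ with λ(p²)=0), P = 1 + p, j : g* → p* the restriction map, and L(λ) = j⁻¹(j(λ)). Then L(λ) = {Ad*(u)λ | u ∈ P}, the P-orbit of λ under the coadjoint action; in particular L(λ) is contained in the G-coadjoint orbit of λ and |L(λ)|² equals the cardinality of the coadjoint orbit of λ. -/

import Mathlib

/-!
The `P`-orbit of `λ` lies in `L(λ)` because `λ(p²) = 0`, so everything reduces to counting.
`Ad*(g)λ = λ` says that `λ` kills all commutators with `g`, so for a multiplicatively closed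
subspace `s ⊇ rad B_λ` the stabilizer of `λ` in `1 + s` is `1 + rad B_λ`, and by
orbit–stabilizer `|(1 + s)·λ| = q^(dim s - dim rad B_λ)`. Maximality of `p` among isotropic
subspaces of the alternating form `B_λ` gives `p^⊥ = p`, hence `rad B_λ ⊆ p` and
`dim g + dim rad B_λ = 2 dim p`. Therefore `|P·λ| = q^(dim g - dim p) = |L(λ)|` and
`|G·λ| = q^(dim g - dim rad B_λ) = |L(λ)|²`.
-/

open Unitization Module

variable {F : Type*} [Field F] [Fintype F]
  (a : Type*) [NonUnitalRing a] [Module F a] [SMulCommClass F a a] [IsScalarTower F a a]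

/-- The coadjoint action `(Ad*(g)λ)(x) = λ(g⁻¹ x g)`. -/
noncomputable def coAd (g : (Unitization F a)ˣ) (l : Module.Dual F a) : Module.Dual F a :=
  l ∘ₗ (sndHom F F a) ∘ₗ (LinearMap.mulRight F ((g : Unitization F a))) ∘ₗ
    (LinearMap.mulLeft F (((g⁻¹ : (Unitization F a)ˣ) : Unitization F a))) ∘ₗ (inrHom F F a)

namespace LinearMap.BilinForm

variable {R M : Type*} [CommSemiring R] [AddCommMonoid M] [Module R M] {B : LinearMap.BilinForm R M}

lemma orthogonal_sup (W₁ W₂ : Submodule R M) :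
    B.orthogonal (W₁ ⊔ W₂) = B.orthogonal W₁ ⊓ B.orthogonal W₂ := by
  refine le_antisymm (le_inf (orthogonal_le le_sup_left) (orthogonal_le le_sup_right)) ?_
  rintro m ⟨h₁, h₂⟩ n hn
  obtain ⟨n₁, hn₁, n₂, hn₂, rfl⟩ := Submodule.mem_sup.mp hn
  simp [h₁ n₁ hn₁, h₂ n₂ hn₂]

variable {K V : Type*} [Field K] [AddCommGroup V] [Module K V] {B : LinearMap.BilinForm K V}
  {p : Submodule K V}

lemma orthogonal_eq_self_of_maximal (hB : B.IsAlt)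
    (hp : Maximal (fun W => W ≤ B.orthogonal W) p) : B.orthogonal p = p := by
  refine le_antisymm (fun v hv => ?_) hp.1
  have hiso : p ⊔ K ∙ v ≤ B.orthogonal (p ⊔ K ∙ v) := by
    rw [orthogonal_sup]
    change _ ≤ _ ⊓ (K ∙ v).orthogonalBilin B
    rw [LinearMap.orthogonal_span_singleton_eq_to_lin_ker]
    refine sup_le (le_inf hp.1 fun x hx => hB.eq_iff.mp (hv x hx)) ?_
    exact (Submodule.span_singleton_le_iff_mem _ _).mpr ⟨hv, hB v⟩
  exact hp.2 hiso le_sup_left (Submodule.mem_sup_right (Submodule.mem_span_singleton_self v))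

lemma ker_le_of_maximal (hB : B.IsAlt) (hp : Maximal (fun W => W ≤ B.orthogonal W) p) :
    LinearMap.ker B ≤ p := by
  rw [← orthogonal_eq_self_of_maximal hB hp, ← orthogonal_top_eq_ker hB.isRefl]
  exact orthogonal_le le_top

theorem finrank_add_finrank_ker_of_maximal [FiniteDimensional K V] (hB : B.IsAlt)
    (hp : Maximal (fun W => W ≤ B.orthogonal W) p) :
    finrank K V + finrank K (LinearMap.ker B) = 2 * finrank K p := by
  have h := finrank_add_finrank_orthogonal' (B := B) p
  rw [orthogonal_eq_self_of_maximal hB hp, inf_eq_right.mpr (ker_le_of_maximal hB hp)] at h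
  omega

end LinearMap.BilinForm

lemma card_setOf_eqOn_submodule {K V : Type*} [Field K] [Finite K] [AddCommGroup V]
    [Module K V] [FiniteDimensional K V] (p : Submodule K V) (l : Dual K V) :
    Nat.card {mu : Dual K V | ∀ x ∈ p, mu x = l x}
      = Nat.card K ^ (finrank K V - finrank K p) := by
  rw [Nat.card_congr
      ((Equiv.subRight l).subtypeEquiv (q := (· ∈ p.dualAnnihilator)) fun mu => ?_),
    natCard_eq_pow_finrank (K := K), ← Subspace.finrank_add_finrank_dualAnnihilator_eq p,
    Nat.add_sub_cancel_left]
  simp [Submodule.mem_dualAnnihilator, sub_eq_zero]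

lemma Unitization.inr_snd_of_fst_eq_zero {R A : Type*} [Zero R] {u : Unitization R A}
    (h : u.fst = 0) : (u.snd : Unitization R A) = u :=
  Unitization.ext (by simp [h]) rfl

section

variable {K A : Type*} [Field K] [NonUnitalRing A] [Module K A] [SMulCommClass K A A]
  [IsScalarTower K A A]

lemma coAd_apply (g : (Unitization K A)ˣ) (l : Dual K A) (x : A) :
    coAd A g l x = l (↑g⁻¹ * (x : Unitization K A) * ↑g).snd := by
  simp [coAd, mul_assoc]

noncomputable instance : MulAction (Unitization K A)ˣ (Dual K A) where
  smul := coAd A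
  one_smul l := by
    show coAd A 1 l = l
    ext x
    simp [coAd_apply]
  mul_smul g h l := by
    show coAd A (g * h) l = coAd A g (coAd A h l)
    ext x
    rw [coAd_apply, coAd_apply, coAd_apply, inr_snd_of_fst_eq_zero (by simp)]
    simp only [mul_inv_rev, Units.val_mul, mul_assoc]

lemma smul_eq_coAd (g : (Unitization K A)ˣ) (l : Dual K A) : g • l = coAd A g l := rfl

def commutatorForm (l : Dual K A) : LinearMap.BilinForm K A :=
  (LinearMap.mul K A - (LinearMap.mul K A).flip).compr₂ l

@[simp] lemma commutatorForm_apply (l : Dual K A) (x y : A) :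
    commutatorForm l x y = l (x * y - y * x) := rfl

lemma commutatorForm_isAlt (l : Dual K A) : (commutatorForm l).IsAlt := fun x => by simp

lemma coAd_eq_self_iff (g : (Unitization K A)ˣ) (l : Dual K A) :
    coAd A g l = l ↔ (g : Unitization K A).snd ∈ LinearMap.ker (commutatorForm l) := by
  have key : ∀ x : A, commutatorForm l (g : Unitization K A).snd x
      = l (↑g * (x : Unitization K A)).snd - l ((x : Unitization K A) * ↑g).snd := by
    intro x
    rw [commutatorForm_apply, ← map_sub]
    simp [snd_mul]
  simp only [LinearMap.mem_ker, LinearMap.ext_iff, key, LinearMap.zero_apply, sub_eq_zero]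
  constructor
  · intro h x
    have := h (↑g * (x : Unitization K A)).snd
    rwa [coAd_apply, inr_snd_of_fst_eq_zero (by simp), ← mul_assoc, Units.inv_mul, one_mul,
      eq_comm] at this
  · intro h x
    set y := (↑g⁻¹ * (x : Unitization K A)).snd
    have hy : (y : Unitization K A) = ↑g⁻¹ * (x : Unitization K A) :=
      inr_snd_of_fst_eq_zero (by simp)
    calc coAd A g l x = l ((y : Unitization K A) * ↑g).snd := by rw [coAd_apply, hy]
      _ = l (↑g * (y : Unitization K A)).snd := (h y).symm
      _ = l x := by rw [hy, ← mul_assoc, Units.mul_inv, one_mul, snd_inr]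

def oneAddSubmonoid (s : Submodule K A) (hs : ∀ x ∈ s, ∀ y ∈ s, x * y ∈ s) :
    Submonoid (Unitization K A)ˣ where
  carrier := {u | ∃ x ∈ s, (u : Unitization K A) = 1 + inr x}
  one_mem' := ⟨0, s.zero_mem, by simp⟩
  mul_mem' := by
    rintro u v ⟨x, hx, hu⟩ ⟨y, hy, hv⟩
    refine ⟨x + y + x * y, add_mem (add_mem hx hy) (hs x hx y hy), ?_⟩
    simp only [Units.val_mul, hu, hv, inr_add, inr_mul]
    noncomm_ring

variable [Finite K] [Finite A]

def oneAddSubgroup (s : Submodule K A) (hs : ∀ x ∈ s, ∀ y ∈ s, x * y ∈ s) :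
    Subgroup (Unitization K A)ˣ :=
  { oneAddSubmonoid s hs with
    inv_mem' := fun {u} hu => by
      have : Finite (Unitization K A) := .of_equiv _ Unitization.equiv.symm
      -- a submonoid of a finite group is closed under inverses
      exact Submonoid.powers_le.mpr hu <|
        (isOfFinOrder_of_finite u).mem_powers_iff_mem_zpowers.mpr
          (inv_mem (Subgroup.mem_zpowers u)) }

lemma mem_oneAddSubgroup {s : Submodule K A} {hs : ∀ x ∈ s, ∀ y ∈ s, x * y ∈ s}
    {u : (Unitization K A)ˣ} :
    u ∈ oneAddSubgroup s hs ↔ ∃ x ∈ s, (u : Unitization K A) = 1 + inr x :=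
  Iff.rfl

variable (s : Submodule K A) (hs : ∀ x ∈ s, ∀ y ∈ s, x * y ∈ s)

noncomputable def oneAddSubgroupEquiv (hnil : ∀ x : A, IsNilpotent (x : Unitization K A)) :
    oneAddSubgroup s hs ≃ s where
  toFun u := ⟨((u : (Unitization K A)ˣ) : Unitization K A).snd, by
    obtain ⟨x, hx, hu⟩ := mem_oneAddSubgroup.mp u.2
    simpa [hu] using hx⟩
  invFun x := ⟨(hnil x).isUnit_one_add.unit, x, x.2, rfl⟩
  left_inv u := by
    obtain ⟨u, x, hx, hu⟩ := u
    refine Subtype.ext (Units.ext ?_)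
    simp [hu]
  right_inv x := by simp

lemma card_oneAddSubgroup (hnil : ∀ x : A, IsNilpotent (x : Unitization K A)) :
    Nat.card (oneAddSubgroup s hs) = Nat.card K ^ finrank K s := by
  rw [Nat.card_congr (oneAddSubgroupEquiv s hs hnil), natCard_eq_pow_finrank (K := K)]

lemma card_stabilizer_oneAddSubgroup (hnil : ∀ x : A, IsNilpotent (x : Unitization K A))
    (l : Dual K A) (hker : LinearMap.ker (commutatorForm l) ≤ s) :
    Nat.card (MulAction.stabilizer (oneAddSubgroup s hs) l)
      = Nat.card K ^ finrank K (LinearMap.ker (commutatorForm l)) := by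
  rw [← natCard_eq_pow_finrank (K := K)]
  refine Nat.card_congr (((oneAddSubgroupEquiv s hs hnil).subtypeEquiv fun u => ?_).trans
    (Equiv.subtypeSubtypeEquivSubtype fun hx => hker hx))
  rw [MulAction.mem_stabilizer_iff, Subgroup.smul_def, smul_eq_coAd, coAd_eq_self_iff]
  rfl

lemma card_orbit_oneAddSubgroup (hnil : ∀ x : A, IsNilpotent (x : Unitization K A))
    (l : Dual K A) (hker : LinearMap.ker (commutatorForm l) ≤ s) :
    Nat.card (MulAction.orbit (oneAddSubgroup s hs) l)
      = Nat.card K ^ (finrank K s - finrank K (LinearMap.ker (commutatorForm l))) := by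
  have h := (MulAction.stabilizer (oneAddSubgroup s hs) l).card_mul_index
  rw [MulAction.index_stabilizer, ← Nat.card_coe_set_eq,
    card_stabilizer_oneAddSubgroup s hs hnil l hker, card_oneAddSubgroup s hs hnil] at h
  rw [← Nat.pow_div (Submodule.finrank_mono hker) Nat.card_pos, ← h,
    Nat.mul_div_cancel_left _ (pow_pos Nat.card_pos _)]

lemma orbit_oneAddSubgroup (l : Dual K A) :
    MulAction.orbit (oneAddSubgroup s hs) l
      = {mu | ∃ u : (Unitization K A)ˣ, (∃ x ∈ s, (u : Unitization K A) = 1 + inr x) ∧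
          coAd A u l = mu} := by
  ext mu
  constructor
  · rintro ⟨⟨u, hu⟩, rfl⟩
    exact ⟨u, hu, rfl⟩
  · rintro ⟨u, hu, rfl⟩
    exact ⟨⟨u, hu⟩, rfl⟩

lemma orbit_oneAddSubgroup_top (l : Dual K A) :
    MulAction.orbit (oneAddSubgroup (⊤ : Submodule K A) fun _ _ _ _ => trivial) l
      = {mu | ∃ g : (Unitization K A)ˣ, (∃ x : A, (g : Unitization K A) = 1 + inr x) ∧
          coAd A g l = mu} := by
  simpa using orbit_oneAddSubgroup ⊤ _ l

lemma orbit_oneAddSubgroup_subset {l : Dual K A} (hl : ∀ x ∈ s, ∀ y ∈ s, l (x * y) = 0) :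
    MulAction.orbit (oneAddSubgroup s hs) l ⊆ {mu | ∀ x ∈ s, mu x = l x} := by
  rintro _ ⟨u, rfl⟩ x hx
  obtain ⟨y, hy, hu⟩ := mem_oneAddSubgroup.mp u.2
  obtain ⟨z, hz, hu'⟩ := mem_oneAddSubgroup.mp (inv_mem u.2)
  change coAd A u l x = l x
  -- `(1 + z) x (1 + y) = x + z x + x y + (z x) y`, and `λ` vanishes on the last three terms
  rw [coAd_apply, hu, hu']
  simp [mul_add, add_mul, hl _ hz _ hx, hl _ hx _ hy, hl _ (hs _ hz _ hx) _ hy]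

end

/-- For a finite-dimensional nilpotent associative algebra `g` over `F_q`, `λ ∈ g*`,
`p` an associative polarization of `λ`, `P = 1 + p`, and
`L(λ) = {μ ∈ g* | μ|_p = λ|_p}`: `L(λ)` equals the `P`-orbit of `λ` under the coadjoint
action, it is contained in the `G`-coadjoint orbit of `λ`, and `|L(λ)|²` equals the
cardinality of the coadjoint orbit of `λ`. -/
theorem stmt19 [FiniteDimensional F a]
    (hnil : ∃ n : ℕ, 0 < n ∧ ∀ f : Fin n → a,
      (List.ofFn (fun i => (inr (f i) : Unitization F a))).prod = 0)
    (lam : Module.Dual F a)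
    (p : Submodule F a)
    (hpmul : ∀ x ∈ p, ∀ y ∈ p, x * y ∈ p)
    (hp2 : ∀ x ∈ p, ∀ y ∈ p, lam (x * y) = 0)
    (hiso : ∀ x ∈ p, ∀ y ∈ p, lam (x * y - y * x) = 0)
    (hmax : ∀ p' : Submodule F a,
      (∀ x ∈ p', ∀ y ∈ p', lam (x * y - y * x) = 0) → p ≤ p' → p' = p) :
    {mu : Module.Dual F a | ∀ x ∈ p, mu x = lam x}
        = {mu : Module.Dual F a |
            ∃ u : (Unitization F a)ˣ, (∃ x ∈ p, (u : Unitization F a) = 1 + inr x) ∧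
              coAd a u lam = mu} ∧
    {mu : Module.Dual F a | ∀ x ∈ p, mu x = lam x}
        ⊆ {mu : Module.Dual F a |
            ∃ g : (Unitization F a)ˣ, (∃ x : a, (g : Unitization F a) = 1 + inr x) ∧
              coAd a g lam = mu} ∧
    (Nat.card {mu : Module.Dual F a | ∀ x ∈ p, mu x = lam x}) ^ 2
      = Nat.card {mu : Module.Dual F a |
          ∃ g : (Unitization F a)ˣ, (∃ x : a, (g : Unitization F a) = 1 + inr x) ∧
            coAd a g lam = mu} := by
  obtain ⟨n, -, hn⟩ := hnil
  have hnil : ∀ x : a, IsNilpotent (x : Unitization F a) := fun x =>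
    ⟨n, by simpa [List.ofFn_const, List.prod_replicate] using hn fun _ => x⟩
  have : Finite a := Module.finite_of_finite F
  have : Finite (Dual F a) := Module.finite_of_finite F
  have hlag : Maximal (fun W => W ≤ (commutatorForm lam).orthogonal W) p :=
    ⟨fun x hx y hy => hiso y hy x hx,
      fun p' hp' hle => (hmax p' (fun x hx y hy => hp' hy x hx) hle).le⟩
  have hker := LinearMap.BilinForm.ker_le_of_maximal (commutatorForm_isAlt lam) hlag
  have hdim :=
    LinearMap.BilinForm.finrank_add_finrank_ker_of_maximal (commutatorForm_isAlt lam) hlag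
  have hpg := Submodule.finrank_le p
  have hL := card_setOf_eqOn_submodule p lam
  have hP := card_orbit_oneAddSubgroup p hpmul hnil lam hker
  have hG := card_orbit_oneAddSubgroup ⊤ (fun _ _ _ _ => trivial) hnil lam le_top
  rw [finrank_top, orbit_oneAddSubgroup_top] at hG
  have hLP : {mu : Dual F a | ∀ x ∈ p, mu x = lam x}
      = MulAction.orbit (oneAddSubgroup p hpmul) lam := by
    refine (Set.eq_of_subset_of_ncard_le (orbit_oneAddSubgroup_subset p hpmul hp2) ?_
      (Set.toFinite _)).symm
    rw [← Nat.card_coe_set_eq, ← Nat.card_coe_set_eq, hL, hP]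
    exact Nat.pow_le_pow_right Nat.card_pos (by omega)
  rw [hLP, orbit_oneAddSubgroup] at hL ⊢
  refine ⟨rfl, fun mu ⟨u, ⟨x, _, hu⟩, h⟩ => ⟨u, ⟨x, hu⟩, h⟩, ?_⟩
  rw [hL, hG, ← pow_mul]
  congr 1
  omega
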